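/- arXiv:2503.20611 — 2 statements merged into one kernel-verified Lean document; each statement's English description precedes it below -/
import Mathlib

section
/- Let n be a natural number, let f : ℝⁿ → ℝ be a convex function, and let s ⊆ ℝⁿ be a nonempty convex set such that f agrees on s with some affine function (i.e., there is an affine A : ℝⁿ → ℝ with f(x) = A(x) for all x ∈ s). Then there exists an affine function g : ℝⁿ → ℝ such that g(x) ≤ f(x) for all x ∈ ℝⁿ and g(x) = f(x) for all x ∈ s. -/
/-!
Subtracting `A` reduces to a convex `h` vanishing on `s`. Separate the open convex strict
epigraph `{(y, t) | h y < t}` from the convex set `s × {0}` by a continuous functional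
`ℓ (y, t) = φ y + t c` and a level `u`. Evaluating at a point of `s × {1}` forces `c < 0`, so the
separation inequality solves to `(u - φ y) / c ≤ h y`, and on `s` the reverse inequality
`u ≤ φ x` gives equality.
-/

open Set

lemma AffineMap.concaveOn {𝕜 E β : Type*} [Ring 𝕜] [PartialOrder 𝕜] [AddCommGroup E]
    [Module 𝕜 E] [AddCommGroup β] [PartialOrder β] [Module 𝕜 β] (A : E →ᵃ[𝕜] β) {s : Set E}
    (hs : Convex 𝕜 s) : ConcaveOn 𝕜 s A :=
  ⟨hs, fun _ _ _ _ _ _ _ _ hab => (Convex.combo_affine_apply hab).ge⟩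

section

variable {E : Type*} [AddCommGroup E] [Module ℝ E] [TopologicalSpace E]
  [IsTopologicalAddGroup E] [ContinuousSMul ℝ E]

lemma ConvexOn.exists_affineMap_le_of_eqOn_zero {h : E → ℝ} (hh : ConvexOn ℝ univ h)
    (hhc : Continuous h) {s : Set E} (hs : s.Nonempty) (hsc : Convex ℝ s) (hzero : EqOn h 0 s) :
    ∃ g : E →ᵃ[ℝ] ℝ, (∀ x, g x ≤ h x) ∧ EqOn g 0 s := by
  obtain ⟨x₀, hx₀⟩ := hs
  have hdisj : Disjoint {p : E × ℝ | h p.1 < p.2} (s ×ˢ {0}) := by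
    refine disjoint_left.2 fun p hp ⟨hp₁, hp₂⟩ => ?_
    simp_all [hzero hp₁]
  obtain ⟨ℓ, u, hlt, hge⟩ := geometric_hahn_banach_open (by simpa using hh.convex_strict_epigraph)
    (isOpen_lt (hhc.comp continuous_fst) continuous_snd) (hsc.prod (convex_singleton 0)) hdisj
  set φ := ℓ.comp (ContinuousLinearMap.inl ℝ E ℝ)
  set c := ℓ (0, 1)
  have hℓ (y : E) (t : ℝ) : ℓ (y, t) = φ y + t * c := by
    have hyt : ((y, t) : E × ℝ) = (y, 0) + t • (0, 1) := by simp
    rw [hyt, map_add, map_smul, smul_eq_mul]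
    rfl
  have hepi (y : E) (t : ℝ) (ht : h y < t) : φ y + t * c < u := hℓ y t ▸ hlt (y, t) ht
  have hbase (x : E) (hx : x ∈ s) : u ≤ φ x := by simpa [hℓ] using hge (x, 0) ⟨hx, rfl⟩
  have hc : c < 0 := by
    linarith [hepi x₀ 1 (by simp [hzero hx₀]), hbase x₀ hx₀]
  set g : E →ᵃ[ℝ] ℝ := AffineMap.const ℝ E (u / c) - c⁻¹ • φ.toLinearMap.toAffineMap
  have hg (y : E) : g y = (u - φ y) / c := by
    simp [g, div_eq_inv_mul, mul_sub]
  have hg_le (y : E) : g y ≤ h y := by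
    refine le_of_forall_gt_imp_ge_of_dense fun t ht => ?_
    rw [hg, div_le_iff_of_neg hc]
    linarith [hepi y t ht]
  refine ⟨g, hg_le, fun x hx => le_antisymm ?_ ?_⟩
  · simpa [hzero hx] using hg_le x
  · rw [Pi.zero_apply, hg]
    exact div_nonneg_of_nonpos (by linarith [hbase x hx]) hc.le

lemma ConvexOn.exists_affineMap_le_of_eqOn {f : E → ℝ} (hf : ConvexOn ℝ univ f)
    (hfc : Continuous f) {s : Set E} (hs : s.Nonempty) (hsc : Convex ℝ s) (A : E →ᵃ[ℝ] ℝ)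
    (hA : Continuous A) (hfA : EqOn f A s) :
    ∃ g : E →ᵃ[ℝ] ℝ, (∀ x, g x ≤ f x) ∧ EqOn g f s := by
  obtain ⟨g, hg_le, hg_s⟩ := (hf.sub (A.concaveOn convex_univ)).exists_affineMap_le_of_eqOn_zero
    (hfc.sub hA) hs hsc fun x hx => sub_eq_zero.2 (hfA hx)
  refine ⟨g + A, fun x => ?_, fun x hx => ?_⟩
  · simpa [le_sub_iff_add_le] using hg_le x
  · simp [hg_s hx, hfA hx]

end

/-- If `f : ℝⁿ → ℝ` is convex and agrees with some affine function on a
nonempty convex set `s`, then there is a globally supporting affine function `g ≤ f`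
which coincides with `f` on `s`. -/
theorem exists_affine_support_of_convexOn_affine_on_convex
    (n : ℕ) (f : (Fin n → ℝ) → ℝ) (hf : ConvexOn ℝ Set.univ f)
    (s : Set (Fin n → ℝ)) (hs : s.Nonempty) (hsconv : Convex ℝ s)
    (A : (Fin n → ℝ) →ᵃ[ℝ] ℝ) (hA : ∀ x ∈ s, f x = A x) :
    ∃ g : (Fin n → ℝ) →ᵃ[ℝ] ℝ, (∀ x : Fin n → ℝ, g x ≤ f x) ∧ ∀ x ∈ s, g x = f x :=
  hf.exists_affineMap_le_of_eqOn (continuousOn_univ.1 (hf.continuousOn isOpen_univ)) hs hsconv A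
    A.continuous_of_finiteDimensional hA
end

section
/- Let n be a natural number and let F : ℝⁿ → ℝ be a continuous function for which there exists a nonempty finite family of affine functions A_1, …, A_m on ℝⁿ such that for every x ∈ ℝⁿ there is some i with F(x) = A_i(x). Then there exist two nonempty finite families of affine functions (P_j)_{j ∈ J} and (Q_k)_{k ∈ K} on ℝⁿ such that F(x) = max_{j ∈ J} P_j(x) − max_{k ∈ K} Q_k(x) for all x ∈ ℝⁿ. -/
/-!
For any two points `x, y` some piece `A i` lies above `F` at `x` and below `F` at `y`: by
continuous induction along the segment `[x, y]`, the parameters at which some piece lying above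
`F` at `x` is below `F` exhaust the segment, since near the right of such a parameter `F` agrees
with a single piece. Consequently `F z = max_x min {A i z | F x ≤ A i x}`, a finite max-min of
affine functions. Differences of maxima of affine functions contain the affine functions and are
closed under negation and `⊔`, because `(g₁ - h₁) ⊔ (g₂ - h₂) = (g₁ + h₂) ⊔ (g₂ + h₁) - (h₁ + h₂)`;
hence also under `⊓` and under finite suprema and infima.
-/

open Finset Filter Topology

theorem Finset.sup'_comp_equivFin_symm {α β : Type*} [SemilatticeSup β] {s : Finset α}
    (hs : s.Nonempty) (f : α → β) (h : (univ : Finset (Fin s.card)).Nonempty) :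
    univ.sup' h (fun j => f (s.equivFin.symm j)) = s.sup' hs f := by
  refine le_antisymm (sup'_le _ _ fun j _ => le_sup' f (s.equivFin.symm j).2)
    (sup'_le _ _ fun a ha => ?_)
  simpa using le_sup' (fun j => f (s.equivFin.symm j)) (mem_univ (s.equivFin ⟨a, ha⟩))

section MaxAffine

variable {E : Type*} [AddCommGroup E] [Module ℝ E]

def IsMaxAffine (f : E → ℝ) : Prop :=
  ∃ (s : Finset (E →ᵃ[ℝ] ℝ)) (hs : s.Nonempty), f = s.sup' hs (⇑)

namespace IsMaxAffine

theorem affineMap (B : E →ᵃ[ℝ] ℝ) : IsMaxAffine ⇑B :=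
  ⟨{B}, singleton_nonempty B, (sup'_singleton _).symm⟩

theorem sup {f g : E → ℝ} (hf : IsMaxAffine f) (hg : IsMaxAffine g) : IsMaxAffine (f ⊔ g) := by
  classical
  obtain ⟨s, hs, rfl⟩ := hf
  obtain ⟨t, ht, rfl⟩ := hg
  exact ⟨s ∪ t, hs.mono subset_union_left, (sup'_union hs ht _).symm⟩

theorem add {f g : E → ℝ} (hf : IsMaxAffine f) (hg : IsMaxAffine g) : IsMaxAffine (f + g) := by
  classical
  obtain ⟨s, hs, rfl⟩ := hf
  obtain ⟨t, ht, rfl⟩ := hg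
  refine ⟨image₂ (· + ·) s t, hs.image₂ ht, funext fun x => ?_⟩
  simp [sup'_image₂_right, Finset.sup'_apply, Finset.sup'_add, Finset.add_sup']

end IsMaxAffine

def IsDiffMaxAffine (f : E → ℝ) : Prop :=
  ∃ g h, IsMaxAffine g ∧ IsMaxAffine h ∧ f = g - h

namespace IsDiffMaxAffine

theorem affineMap (B : E →ᵃ[ℝ] ℝ) : IsDiffMaxAffine ⇑B :=
  ⟨B, 0, .affineMap B, .affineMap 0, by simp⟩

theorem neg {f : E → ℝ} (hf : IsDiffMaxAffine f) : IsDiffMaxAffine (-f) := by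
  obtain ⟨g, h, hg, hh, rfl⟩ := hf
  exact ⟨h, g, hh, hg, neg_sub g h⟩

theorem sup {f₁ f₂ : E → ℝ} (hf₁ : IsDiffMaxAffine f₁) (hf₂ : IsDiffMaxAffine f₂) :
    IsDiffMaxAffine (f₁ ⊔ f₂) := by
  obtain ⟨g₁, h₁, hg₁, hh₁, rfl⟩ := hf₁
  obtain ⟨g₂, h₂, hg₂, hh₂, rfl⟩ := hf₂
  refine ⟨(g₁ + h₂) ⊔ (g₂ + h₁), h₁ + h₂, (hg₁.add hh₂).sup (hg₂.add hh₁), hh₁.add hh₂, ?_⟩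
  rw [sup_sub]
  congr 1 <;> abel

theorem inf {f₁ f₂ : E → ℝ} (hf₁ : IsDiffMaxAffine f₁) (hf₂ : IsDiffMaxAffine f₂) :
    IsDiffMaxAffine (f₁ ⊓ f₂) := by
  simpa [neg_sup] using (hf₁.neg.sup hf₂.neg).neg

theorem finset_sup' {ι : Type*} {s : Finset ι} (hs : s.Nonempty) {f : ι → E → ℝ}
    (hf : ∀ i ∈ s, IsDiffMaxAffine (f i)) : IsDiffMaxAffine (s.sup' hs f) :=
  sup'_induction hs f (fun _ h₁ _ h₂ => h₁.sup h₂) hf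

theorem finset_inf' {ι : Type*} {s : Finset ι} (hs : s.Nonempty) {f : ι → E → ℝ}
    (hf : ∀ i ∈ s, IsDiffMaxAffine (f i)) : IsDiffMaxAffine (s.inf' hs f) :=
  inf'_induction hs f (fun _ h₁ _ h₂ => h₁.inf h₂) hf

end IsDiffMaxAffine

end MaxAffine

theorem exists_eq_and_frequently_eq_of_frequently_exists_eq {X Y ι : Type*} [TopologicalSpace X]
    [TopologicalSpace Y] [T2Space Y] [Finite ι] {f : X → Y} {g : ι → X → Y} (hf : Continuous f)
    (hg : ∀ i, Continuous (g i)) {l : Filter X} {x : X} (hl : l ≤ 𝓝 x)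
    (h : ∃ᶠ y in l, ∃ i, f y = g i y) : ∃ i, f x = g i x ∧ ∃ᶠ y in l, f y = g i y := by
  obtain ⟨i, hi⟩ := frequently_exists.mp h
  exact ⟨i, (isClosed_eq hf (hg i)).mem_of_frequently_of_tendsto hi (tendsto_id'.mpr hl), hi⟩

theorem exists_affineMap_ge_left_le_right {ι : Type*} [Finite ι] {f : ℝ → ℝ} (hf : Continuous f)
    (a : ι → ℝ →ᵃ[ℝ] ℝ) {x y : ℝ} (hxy : x ≤ y) (ha : ∀ t ∈ Set.Icc x y, ∃ i, f t = a i t) :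
    ∃ i, f x ≤ a i x ∧ a i y ≤ f y := by
  have ha_cont (i : ι) : Continuous (a i) := (a i).continuous_of_finiteDimensional
  let S := ⋃ i, {t | f x ≤ a i x ∧ a i t ≤ f t}
  have hS : IsClosed (S ∩ Set.Icc x y) := by
    refine (isClosed_iUnion_of_finite fun i => ?_).inter isClosed_Icc
    exact isClosed_const.inter (isClosed_le (ha_cont i) hf)
  have hxS : x ∈ S := by
    obtain ⟨i, hi⟩ := ha x ⟨le_rfl, hxy⟩
    exact Set.mem_iUnion.mpr ⟨i, hi.le, hi.ge⟩
  simpa [S] using hS.mem_of_ge_of_forall_exists_gt hxS hxy fun s ⟨hsS, hs⟩ => by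
    obtain ⟨j, hjx, hjs⟩ := Set.mem_iUnion.mp hsS
    have hIoc : ∀ᶠ t in 𝓝[>] s, t ∈ Set.Ioc s y := Ioc_mem_nhdsGT hs.2
    obtain ⟨k, hks, hk⟩ := exists_eq_and_frequently_eq_of_frequently_exists_eq hf ha_cont
      nhdsWithin_le_nhds (hIoc.mono fun t ht => ha t ⟨hs.1.trans ht.1.le, ht.2⟩).frequently
    obtain ⟨t, htk, hts⟩ := (hk.and_eventually hIoc).exists
    refine ⟨t, Set.mem_iUnion.mpr ?_, hts⟩
    by_cases hkx : f x ≤ a k x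
    · exact ⟨k, hkx, htk.ge⟩
    -- `a j - a k` is positive at `x` and nonpositive at `s`, so by concavity nonpositive at `t`
    have hmin := ((concaveOn_id convex_univ).comp_affineMap (a j - a k)).min_le_of_mem_Icc
      (Set.mem_univ x) (Set.mem_univ t) ⟨hs.1, hts.1.le⟩
    simp only [Function.comp_apply, id, AffineMap.coe_sub, Pi.sub_apply, min_le_iff] at hmin
    refine ⟨j, hjx, ?_⟩
    rcases hmin with h | h <;> linarith

section PiecewiseAffine

variable {E ι : Type*} [AddCommGroup E] [Module ℝ E] [TopologicalSpace E]
  [IsTopologicalAddGroup E] [ContinuousSMul ℝ E] [Finite ι] {F : E → ℝ}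

theorem Continuous.exists_affineMap_ge_le (hF : Continuous F) (A : ι → E →ᵃ[ℝ] ℝ)
    (hA : ∀ x, ∃ i, F x = A i x) (x y : E) : ∃ i, F x ≤ A i x ∧ A i y ≤ F y := by
  simpa using exists_affineMap_ge_left_le_right (hF.comp AffineMap.lineMap_continuous)
    (fun i => (A i).comp (AffineMap.lineMap x y)) zero_le_one fun t _ => hA _

theorem Continuous.exists_eq_sup'_inf' (hF : Continuous F) (A : ι → E →ᵃ[ℝ] ℝ)
    (hA : ∀ x, ∃ i, F x = A i x) :
    ∃ (T : Finset {S : Finset ι // S.Nonempty}) (hT : T.Nonempty),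
      F = T.sup' hT fun S => S.1.inf' S.2 fun i => ⇑(A i) := by
  let σ (x : E) : {S : Finset ι // S.Nonempty} :=
    ⟨(Set.toFinite {i | F x ≤ A i x}).toFinset, by
      obtain ⟨i, hi⟩ := hA x
      exact ⟨i, by simp [hi]⟩⟩
  have hT : (Set.toFinite (Set.range σ)).toFinset.Nonempty := ⟨σ 0, by simp⟩
  refine ⟨_, hT, funext fun z => le_antisymm ?_ ?_⟩
  · simp only [Finset.sup'_apply, Finset.inf'_apply]
    exact le_sup'_of_le _ (b := σ z) (by simp) (le_inf' _ _ fun i hi => by simpa [σ] using hi)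
  · simp only [Finset.sup'_apply, Finset.inf'_apply]
    refine sup'_le _ _ fun S hS => ?_
    obtain ⟨x, rfl⟩ : S ∈ Set.range σ := by simpa using hS
    obtain ⟨i, hix, hiz⟩ := hF.exists_affineMap_ge_le A hA x z
    exact inf'_le_of_le _ (by simpa [σ] using hix) hiz

theorem Continuous.isDiffMaxAffine (hF : Continuous F) (A : ι → E →ᵃ[ℝ] ℝ)
    (hA : ∀ x, ∃ i, F x = A i x) : IsDiffMaxAffine F := by
  obtain ⟨T, hT, rfl⟩ := hF.exists_eq_sup'_inf' A hA
  exact .finset_sup' hT fun S _ => .finset_inf' S.2 fun i _ => .affineMap (A i)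

end PiecewiseAffine

theorem continuous_piecewise_affine_eq_sub_of_max_general
    (n : ℕ) (F : (Fin n → ℝ) → ℝ) (hF : Continuous F)
    (m : ℕ) (A : Fin m → ((Fin n → ℝ) →ᵃ[ℝ] ℝ))
    (hA : ∀ x : Fin n → ℝ, ∃ i : Fin m, F x = A i x) :
    ∃ (J K : ℕ) (hJ : 0 < J) (hK : 0 < K)
      (P : Fin J → ((Fin n → ℝ) →ᵃ[ℝ] ℝ))
      (Q : Fin K → ((Fin n → ℝ) →ᵃ[ℝ] ℝ)),
      ∀ x : Fin n → ℝ,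
        F x =
          (Finset.univ.sup' (Finset.univ_nonempty_iff.mpr (Fin.pos_iff_nonempty.mp hJ))
            fun j => P j x)
          - (Finset.univ.sup' (Finset.univ_nonempty_iff.mpr (Fin.pos_iff_nonempty.mp hK))
            fun k => Q k x) := by
  obtain ⟨g, h, ⟨s, hs, rfl⟩, ⟨t, ht, rfl⟩, hF_eq⟩ := hF.isDiffMaxAffine A hA
  refine ⟨s.card, t.card, card_pos.mpr hs, card_pos.mpr ht, fun j => s.equivFin.symm j,
    fun k => t.equivFin.symm k, fun x => ?_⟩
  rw [sup'_comp_equivFin_symm hs (· x), sup'_comp_equivFin_symm ht (· x), hF_eq]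
  simp [Finset.sup'_apply]

/-- A continuous piecewise affine function `F : ℝⁿ → ℝ` (everywhere
equal to one of finitely many affine functions) is a difference of two maxima of
nonempty finite families of affine functions. -/
theorem continuous_piecewise_affine_eq_sub_of_max
    (n : ℕ) (F : (Fin n → ℝ) → ℝ) (hF : Continuous F)
    (m : ℕ) (hm : 0 < m) (A : Fin m → ((Fin n → ℝ) →ᵃ[ℝ] ℝ))
    (hA : ∀ x : Fin n → ℝ, ∃ i : Fin m, F x = A i x) :
    ∃ (J K : ℕ) (hJ : 0 < J) (hK : 0 < K)
      (P : Fin J → ((Fin n → ℝ) →ᵃ[ℝ] ℝ))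
      (Q : Fin K → ((Fin n → ℝ) →ᵃ[ℝ] ℝ)),
      ∀ x : Fin n → ℝ,
        F x =
          (Finset.univ.sup' (Finset.univ_nonempty_iff.mpr (Fin.pos_iff_nonempty.mp hJ))
            fun j => P j x)
          - (Finset.univ.sup' (Finset.univ_nonempty_iff.mpr (Fin.pos_iff_nonempty.mp hK))
            fun k => Q k x) :=
  continuous_piecewise_affine_eq_sub_of_max_general n F hF m A hA
end
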